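/- Correctness of the constant-space multiplication invariant: in the leader-based multiplication protocol, after the leader has completed k full rounds (each round deletes one agent from X and, by alternately marking one y as ŷ and creating one z, adds exactly |Y| agents to Z, then unmarks all ŷ back to y), the configuration satisfies |X| = x_0 − k, |Y| = y_0, and |Z| = k·y_0, where x_0, y_0 are the initial sizes. Consequently, when the protocol terminates (X empty, leader in state L_out), |Z| = x_0·y_0. -/
import Mathlib


inductive MulLeader | Lin | Ly | Lz | Lyhat | Lout
deriving DecidableEq

/-- A configuration of the leader-based multiplication protocol, recorded by the
leader's state and the numbers of agents in states `x`, `y`, `ŷ`, `z`, `free`. -/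
structure MulConf where
  leader : MulLeader
  x : ℕ
  y : ℕ
  yhat : ℕ
  z : ℕ
  free : ℕ
deriving DecidableEq

open MulLeader

/-- The seven transition rules of the multiplication protocol. -/
inductive mulStep : MulConf → MulConf → Prop
  | rule1 (x y yh z f : ℕ) :
      mulStep ⟨Lin, x + 1, y, yh, z, f⟩ ⟨Ly, x, y, yh, z, f + 1⟩
  | rule2 (y yh z f : ℕ) :
      mulStep ⟨Lin, 0, y, yh, z, f⟩ ⟨Lout, 0, y, yh, z, f⟩
  | rule3 (x y yh z f : ℕ) :
      mulStep ⟨Ly, x, y + 1, yh, z, f⟩ ⟨Lz, x, y, yh + 1, z, f⟩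
  | rule4 (x yh z f : ℕ) :
      mulStep ⟨Ly, x, 0, yh, z, f⟩ ⟨Lyhat, x, 0, yh, z, f⟩
  | rule5 (x y yh z f : ℕ) :
      mulStep ⟨Lz, x, y, yh, z, f + 1⟩ ⟨Ly, x, y, yh, z + 1, f⟩
  | rule6 (x y yh z f : ℕ) :
      mulStep ⟨Lyhat, x, y, yh + 1, z, f⟩ ⟨Lyhat, x, y + 1, yh, z, f⟩
  | rule7 (x y z f : ℕ) :
      mulStep ⟨Lyhat, x, y, 0, z, f⟩ ⟨Lin, x, y, 0, z, f⟩

def MulInv (x0 y0 : ℕ) (c : MulConf) : Prop :=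
  match c.leader with
  | Lin => ∃ k ≤ x0, c.x = x0 - k ∧ c.y = y0 ∧ c.yhat = 0 ∧ c.z = k * y0
  | Lout => c.x = 0 ∧ c.y = y0 ∧ c.yhat = 0 ∧ c.z = x0 * y0
  | Ly => ∃ k < x0, ∃ j ≤ y0, c.x = x0 - (k + 1) ∧ c.y = y0 - j ∧
      c.yhat = j ∧ c.z = k * y0 + j
  | Lz => ∃ k < x0, ∃ j < y0, c.x = x0 - (k + 1) ∧ c.y = y0 - (j + 1) ∧
      c.yhat = j + 1 ∧ c.z = k * y0 + j
  | Lyhat => ∃ k < x0, c.x = x0 - (k + 1) ∧ c.y + c.yhat = y0 ∧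
      c.z = (k + 1) * y0

lemma mulInv_step {x0 y0 : ℕ} {c d : MulConf}
    (hc : MulInv x0 y0 c) (h : mulStep c d) : MulInv x0 y0 d := by
  cases h with
  | rule1 x y yh z f =>
      dsimp only [MulInv] at hc ⊢
      obtain ⟨k, hk, hx, hy, hyh, hz⟩ := hc
      exact ⟨k, by omega, 0, by omega, by omega, by omega, by omega, by omega⟩
  | rule2 y yh z f =>
      dsimp only [MulInv] at hc ⊢
      obtain ⟨k, hk, hx, hy, hyh, hz⟩ := hc
      have : k = x0 := by omega
      exact ⟨rfl, hy, hyh, by rw [hz, this]⟩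
  | rule3 x y yh z f =>
      dsimp only [MulInv] at hc ⊢
      obtain ⟨k, hk, j, hj, hx, hy, hyh, hz⟩ := hc
      exact ⟨k, hk, j, by omega, hx, by omega, by omega, hz⟩
  | rule4 x yh z f =>
      dsimp only [MulInv] at hc ⊢
      obtain ⟨k, hk, j, hj, hx, hy, hyh, hz⟩ := hc
      have hjy : j = y0 := by omega
      refine ⟨k, hk, hx, by omega, ?_⟩
      rw [hz, hjy]; ring
  | rule5 x y yh z f =>
      dsimp only [MulInv] at hc ⊢
      obtain ⟨k, hk, j, hj, hx, hy, hyh, hz⟩ := hc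
      exact ⟨k, hk, j + 1, by omega, hx, by omega, by omega, by omega⟩
  | rule6 x y yh z f =>
      dsimp only [MulInv] at hc ⊢
      obtain ⟨k, hk, hx, hy, hz⟩ := hc
      exact ⟨k, hk, hx, by omega, hz⟩
  | rule7 x y z f =>
      dsimp only [MulInv] at hc ⊢
      obtain ⟨k, hk, hx, hy, hz⟩ := hc
      exact ⟨k + 1, by omega, hx, by omega, rfl, hz⟩

/-- Invariant of the leader-based multiplication protocol: in any reachable
configuration with the leader in state `L_in` (i.e. after some number `k` of
completed rounds), `|X| = x₀ − k`, `|Y| = y₀` and `|Z| = k·y₀`; consequently,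
on termination (leader in state `L_out`, `X` empty) `|Z| = x₀·y₀`. -/
theorem multiplication_invariant (x0 y0 f0 : ℕ)
    (c : MulConf)
    (hreach : Relation.ReflTransGen mulStep ⟨Lin, x0, y0, 0, 0, f0⟩ c) :
    (c.leader = Lin →
      ∃ k ≤ x0, c.x = x0 - k ∧ c.y = y0 ∧ c.yhat = 0 ∧ c.z = k * y0) ∧
    (c.leader = Lout → c.x = 0 ∧ c.z = x0 * y0) := by
  have hinv : MulInv x0 y0 c := by
    induction hreach with
    | refl => exact ⟨0, by omega, by simp, rfl, rfl, by simp⟩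
    | tail _ hstep ih => exact mulInv_step ih hstep
  obtain ⟨l, x, y, yh, z, f⟩ := c
  constructor
  · rintro rfl; exact hinv
  · rintro rfl; obtain ⟨hx, _, _, hz⟩ := hinv; exact ⟨hx, hz⟩
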